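/- For every integer K ≥ 4, the function h₃(d) = 4d(3K² − 6dK + 4d² − 3K + 2)/(K(K−1)(K−2)) over integers 0 ≤ d ≤ K attains its maximum uniquely at d = K. -/

import Mathlib

/-!
The value at `d = K` is `4`, and the gap factors as
`K(K-1)(K-2) - d(3K² - 6dK + 4d² - 3K + 2) = (K - d)(4d² - 2Kd + (K-1)(K-2))`.
The quadratic factor has discriminant `-4(3K² - 12K + 8)`, negative once `K ≥ 4`,
so it is positive for every `d`, and the sign of the gap is the sign of `K - d`.
-/

noncomputable def h3 (K d : ℝ) : ℝ :=
  4 * d * (3 * K ^ 2 - 6 * d * K + 4 * d ^ 2 - 3 * K + 2) / (K * (K - 1) * (K - 2))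

namespace h3

variable {K : ℝ}

lemma denom_pos (hK : 4 ≤ K) : 0 < K * (K - 1) * (K - 2) := by
  have : 0 < K - 2 := by linarith
  have : 0 < K - 1 := by linarith
  have : 0 < K := by linarith
  positivity

lemma quadraticFactor_pos (hK : 4 ≤ K) (d : ℝ) : 0 < 4 * d ^ 2 - 2 * K * d + (K - 1) * (K - 2) := by
  nlinarith [sq_nonneg (4 * d - K)]

lemma self_sub (d : ℝ) :
    h3 K K - h3 K d =
      4 * ((K - d) * (4 * d ^ 2 - 2 * K * d + (K - 1) * (K - 2))) / (K * (K - 1) * (K - 2)) := by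
  unfold h3
  rw [← sub_div]
  ring

lemma le_self (hK : 4 ≤ K) {d : ℝ} (hd : d ≤ K) : h3 K d ≤ h3 K K := by
  have hgap : 0 ≤ h3 K K - h3 K d := by
    rw [self_sub]
    have := mul_nonneg (sub_nonneg.2 hd) (quadraticFactor_pos hK d).le
    exact div_nonneg (by positivity) (denom_pos hK).le
  linarith

lemma lt_self (hK : 4 ≤ K) {d : ℝ} (hd : d < K) : h3 K d < h3 K K := by
  have hgap : 0 < h3 K K - h3 K d := by
    rw [self_sub]
    have := mul_pos (sub_pos.2 hd) (quadraticFactor_pos hK d)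
    exact div_pos (by positivity) (denom_pos hK)
  linarith

end h3

/-- For every integer `K ≥ 4`, the function
`h₃(d) = 4d(3K²−6dK+4d²−3K+2)/(K(K−1)(K−2))` over integers `0 ≤ d ≤ K`
attains its maximum uniquely at `d = K`. -/
theorem h3_max_unique_at_K (K : ℕ) (hK : 4 ≤ K) :
    ∀ d : ℕ, d ≤ K →
      (4 * (d : ℝ) * (3 * (K : ℝ) ^ 2 - 6 * d * K + 4 * d ^ 2 - 3 * K + 2) /
          ((K : ℝ) * ((K : ℝ) - 1) * ((K : ℝ) - 2)) ≤
        4 * (K : ℝ) * (3 * (K : ℝ) ^ 2 - 6 * K * K + 4 * (K : ℝ) ^ 2 - 3 * K + 2) /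
          ((K : ℝ) * ((K : ℝ) - 1) * ((K : ℝ) - 2))) ∧
      (d ≠ K →
        4 * (d : ℝ) * (3 * (K : ℝ) ^ 2 - 6 * d * K + 4 * d ^ 2 - 3 * K + 2) /
          ((K : ℝ) * ((K : ℝ) - 1) * ((K : ℝ) - 2)) <
        4 * (K : ℝ) * (3 * (K : ℝ) ^ 2 - 6 * K * K + 4 * (K : ℝ) ^ 2 - 3 * K + 2) /
          ((K : ℝ) * ((K : ℝ) - 1) * ((K : ℝ) - 2))) := by
  intro d hd
  have hK' : (4 : ℝ) ≤ K := by exact_mod_cast hK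
  refine ⟨h3.le_self hK' (by exact_mod_cast hd), fun hne => h3.lt_self hK' ?_⟩
  exact_mod_cast lt_of_le_of_ne hd hne
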